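/- arXiv:2202.09068 — 3 statements merged into one kernel-verified Lean document; each statement's English description precedes it below -/
import Mathlib

section
/- Let G be a connected subgraph of the hypercube Q_n that is an isometric subgraph (the graph distance in G between any two vertices equals their Hamming distance). Then the Wiener index of G satisfies W(G) = Σ_{i=1}^n |W_{(i,0)}(G)|·|W_{(i,1)}(G)|, where W_{(i,χ)}(G) is the set of vertices of G whose i-th coordinate equals χ. -/
/-!
Summing the identity `d_G(u, v) = ∑ᵢ [uᵢ ≠ vᵢ]` over all ordered pairs of vertices and
exchanging the sums, coordinate `i` contributes the number of ordered pairs separated by `i`,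
namely `2 |W_{(i,0)}| |W_{(i,1)}|`; the ordered sum is twice the Wiener index.
-/

/-- Vertices of the hypercube `Q_n`: binary strings of length `n`. -/
abbrev Vtx (n : ℕ) := Fin n → Bool

/-- The subgraph of the hypercube `Q_n` induced by a set `V` of vertices:
two vertices are adjacent iff they differ in precisely one coordinate
(i.e. their Hamming distance is `1`). -/
def cubeGraph {n : ℕ} (V : Finset (Vtx n)) : SimpleGraph {u : Vtx n // u ∈ V} where
  Adj u v := hammingDist u.1 v.1 = 1
  symm := ⟨fun u v h => (hammingDist_comm v.1 u.1).trans h⟩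
  loopless := ⟨fun u h => by simp [hammingDist_self] at h⟩

instance {n : ℕ} {V : Finset (Vtx n)} : DecidableRel (cubeGraph V).Adj :=
  fun u v => inferInstanceAs (Decidable (hammingDist u.1 v.1 = 1))

/-- A set of vertices of `Q_n` is downward closed if `u ≤ v` componentwise
and `v ∈ V` imply `u ∈ V`. -/
def DownClosed {n : ℕ} (V : Finset (Vtx n)) : Prop :=
  ∀ u v : Vtx n, (∀ i, u i ≤ v i) → v ∈ V → u ∈ V

/-- The Wiener index: the sum of graph distances over all unordered pairs of vertices. -/
noncomputable def wiener {α : Type*} [Fintype α] [DecidableEq α] (G : SimpleGraph α) : ℕ :=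
  ∑ p : Sym2 α, Sym2.lift ⟨fun u v => G.dist u v, fun _ _ => SimpleGraph.dist_comm⟩ p

/-- The semicube `W_{(i,χ)}`: vertices of the induced subgraph on `V`
whose `i`-th coordinate equals `χ` (`false` codes `0`, `true` codes `1`). -/
def semicube {n : ℕ} (V : Finset (Vtx n)) (i : Fin n) (χ : Bool) : Finset (Vtx n) :=
  V.filter (fun u => u i = χ)

open Finset

section Sym2Sum

variable {α M : Type*} [Fintype α] [DecidableEq α] [AddCommMonoid M]

lemma sum_filter_sym2_mk_eq (f : α → α → M) (hsymm : ∀ u v, f u v = f v u)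
    (hdiag : ∀ u, f u u = 0) (p : Sym2 α) :
    ∑ q : α × α with s(q.1, q.2) = p, f q.1 q.2 = 2 • Sym2.lift ⟨f, hsymm⟩ p := by
  induction p using Sym2.ind with
  | _ a b =>
    have hfiber :
        ({q : α × α | s(q.1, q.2) = s(a, b)} : Finset (α × α)) = {(a, b), (b, a)} := by
      ext ⟨x, y⟩
      simp only [mem_filter, mem_univ, true_and, Sym2.eq_iff, mem_insert, mem_singleton,
        Prod.ext_iff]
    rw [hfiber]
    rcases eq_or_ne a b with rfl | hab
    · simp [hdiag]
    · rw [sum_pair (by simp [hab]), Sym2.lift_mk, hsymm b a, two_nsmul]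

lemma two_nsmul_sum_sym2_lift (f : α → α → M) (hsymm : ∀ u v, f u v = f v u)
    (hdiag : ∀ u, f u u = 0) :
    2 • ∑ p : Sym2 α, Sym2.lift ⟨f, hsymm⟩ p = ∑ u, ∑ v, f u v := by
  calc 2 • ∑ p : Sym2 α, Sym2.lift ⟨f, hsymm⟩ p
      = ∑ p : Sym2 α, ∑ q : α × α with s(q.1, q.2) = p, f q.1 q.2 := by
        rw [smul_sum]
        exact sum_congr rfl fun p _ => (sum_filter_sym2_mk_eq f hsymm hdiag p).symm
    _ = ∑ q : α × α, f q.1 q.2 :=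
        sum_fiberwise univ (fun q : α × α => s(q.1, q.2)) fun q => f q.1 q.2
    _ = ∑ u, ∑ v, f u v := Fintype.sum_prod_type _

lemma two_mul_wiener (G : SimpleGraph α) : 2 * wiener G = ∑ u, ∑ v, G.dist u v :=
  two_nsmul_sum_sym2_lift (fun u v => G.dist u v) (fun _ _ => SimpleGraph.dist_comm)
    fun _ => SimpleGraph.dist_self

end Sym2Sum

lemma sum_sum_boole_ne {β : Type*} (S : Finset β) (g : β → Bool) :
    ∑ u ∈ S, ∑ v ∈ S, (if g u ≠ g v then 1 else 0) =
      2 * (#{u ∈ S | g u = false} * #{u ∈ S | g u = true}) := by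
  have hsplit : ∀ u v, (if g u ≠ g v then 1 else 0) =
      (if g u = false then 1 else 0) * (if g v = true then 1 else 0) +
        (if g u = true then 1 else 0) * (if g v = false then 1 else 0) := by
    intro u v
    cases g u <;> cases g v <;> rfl
  simp only [hsplit, sum_add_distrib, ← sum_mul_sum, sum_boole, Nat.cast_id]
  ring

lemma sum_sum_hammingDist {ι : Type*} [Fintype ι] (S : Finset (ι → Bool)) :
    ∑ u ∈ S, ∑ v ∈ S, hammingDist u v =
      2 * ∑ i, #{u ∈ S | u i = false} * #{u ∈ S | u i = true} := by
  have hdist : ∀ u v : ι → Bool, hammingDist u v = ∑ i, if u i ≠ v i then 1 else 0 :=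
    fun u v => card_filter _ _
  calc ∑ u ∈ S, ∑ v ∈ S, hammingDist u v
      = ∑ u ∈ S, ∑ i, ∑ v ∈ S, (if u i ≠ v i then 1 else 0) := by
        simp only [hdist]
        exact sum_congr rfl fun _ _ => sum_comm
    _ = ∑ i, ∑ u ∈ S, ∑ v ∈ S, (if u i ≠ v i then 1 else 0) := sum_comm
    _ = 2 * ∑ i, #{u ∈ S | u i = false} * #{u ∈ S | u i = true} := by
        rw [mul_sum]
        exact sum_congr rfl fun i _ => sum_sum_boole_ne S (· i)

theorem wiener_eq_sum_semicube_products_general {n : ℕ} (V : Finset (Vtx n))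
    (hiso : ∀ u v : {u : Vtx n // u ∈ V}, (cubeGraph V).dist u v = hammingDist u.1 v.1) :
    wiener (cubeGraph V) =
      ∑ i : Fin n, (semicube V i false).card * (semicube V i true).card := by
  refine Nat.eq_of_mul_eq_mul_left two_pos ?_
  calc 2 * wiener (cubeGraph V)
      = ∑ u : {u // u ∈ V}, ∑ v : {u // u ∈ V}, hammingDist u.1 v.1 := by
        simp only [two_mul_wiener, hiso]
    _ = ∑ u ∈ V, ∑ v ∈ V, hammingDist u v := by
        rw [← sum_coe_sort V]
        exact sum_congr rfl fun u _ => sum_coe_sort V (hammingDist u.1)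
    _ = _ := sum_sum_hammingDist V

/-- If the subgraph of `Q_n` induced by `V` is connected and isometric
(graph distance equals Hamming distance), then
`W(G) = ∑_{i=1}^n |W_{(i,0)}(G)|·|W_{(i,1)}(G)|`. -/
theorem wiener_eq_sum_semicube_products {n : ℕ} (V : Finset (Vtx n))
    (hconn : (cubeGraph V).Connected)
    (hiso : ∀ u v : {u : Vtx n // u ∈ V}, (cubeGraph V).dist u v = hammingDist u.1 v.1) :
    wiener (cubeGraph V) =
      ∑ i : Fin n, (semicube V i false).card * (semicube V i true).card :=
  wiener_eq_sum_semicube_products_general V hiso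
end

section
/- Let G be a daisy cube of dimension n, i.e., the subgraph of the hypercube Q_n induced by a nonempty downward-closed vertex set V ⊆ {0,1}^n, and for i ∈ {1,…,n} let |E_i| be the number of edges of G using direction i. Then the Mostar index of G satisfies Mo(G) = |V(G)|·|E(G)| − 2·Σ_{i=1}^n |E_i|². -/
/-- `closerCount G u v` is the number of vertices of `G` strictly closer
(in graph distance) to `u` than to `v`. -/
noncomputable def closerCount {α : Type*} (G : SimpleGraph α) (u v : α) : ℕ :=
  Nat.card {w : α // G.dist w u < G.dist w v}

/-- The Mostar index: `∑_{uv ∈ E(G)} |n_{u,v} - n_{v,u}|`. -/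
noncomputable def mostar {α : Type*} [Fintype α] [DecidableEq α] (G : SimpleGraph α)
    [DecidableRel G.Adj] : ℕ :=
  ∑ e ∈ G.edgeFinset,
    Sym2.lift ⟨fun u v => ((closerCount G u v : ℤ) - (closerCount G v u : ℤ)).natAbs,
      fun a b => by
        show (_ - _ : ℤ).natAbs = (_ - _ : ℤ).natAbs
        rw [← Int.natAbs_neg, neg_sub]⟩ e

/-- The set of edges of the induced subgraph on `V` using direction `i`,
i.e. whose endpoints differ in coordinate `i`. -/
def dirEdges {n : ℕ} (V : Finset (Vtx n)) (i : Fin n) : Finset (Sym2 {u : Vtx n // u ∈ V}) :=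
  (cubeGraph V).edgeFinset.filter
    (fun e => Sym2.lift ⟨fun u v => decide (u.1 i ≠ v.1 i),
      fun u v => by rw [decide_eq_decide]; exact ne_comm⟩ e = true)

/-! Because `V` is downward closed, two vertices of `V` are joined inside `V` by a path that
fixes one differing coordinate at a time (lowering a `true` of `u` if there is one, raising a
`false` of `u` below `v` otherwise), so distances in a daisy cube are Hamming distances. For an
edge `ab` in direction `i`, a vertex `w` is then closer to `a` exactly when `w i = a i`, so
`|n_{a,b} - n_{b,a}|` is the difference of the numbers of vertices with `i`-th coordinate
`false` and `true`. Clearing coordinate `i` maps the vertices with `i`-th coordinate `true`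
bijectively onto the edges in direction `i` and injectively into the vertices with `i`-th
coordinate `false`; hence each edge in direction `i` contributes `|V| - 2|E_i|`, and summing
over the directions gives the formula. -/

open Finset Function

section Hamming

variable {ι : Type*} {β : ι → Type*} [Fintype ι] [DecidableEq ι] [∀ i, DecidableEq (β i)]

theorem hammingDist_update_right_add (x y : ∀ i, β i) (i : ι) (b : β i) :
    hammingDist x (update y i b) + (if x i ≠ y i then 1 else 0) =
      hammingDist x y + (if x i ≠ b then 1 else 0) := by
  simp only [hammingDist, card_filter]
  rw [← add_sum_erase _ _ (mem_univ i), ← add_sum_erase _ _ (mem_univ i),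
    sum_congr rfl fun j hj => by rw [update_of_ne (ne_of_mem_erase hj)], update_self]
  ring

theorem hammingDist_update_self_right {x : ∀ i, β i} {i : ι} {b : β i} (h : x i ≠ b) :
    hammingDist x (update x i b) = 1 := by
  simpa [h] using hammingDist_update_right_add x x i b

theorem hammingDist_update_left_add_one {x y : ∀ i, β i} {i : ι} (h : x i ≠ y i) :
    hammingDist (update x i (y i)) y + 1 = hammingDist x y := by
  simpa [hammingDist_comm, h.symm] using hammingDist_update_right_add y x i (y i)

theorem hammingDist_lt_hammingDist_update_iff {w x : ∀ i, β i} {i : ι} {b : β i}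
    (h : x i ≠ b) : hammingDist w x < hammingDist w (update x i b) ↔ w i = x i := by
  have := hammingDist_update_right_add w x i b
  by_cases hw : w i = x i
  · simp only [hw, h, ne_eq, not_true, not_false_eq_true, if_true, if_false] at this
    simp only [hw, iff_true]
    omega
  · simp only [hw, ne_eq, not_false_eq_true, if_true, iff_false, not_lt] at this ⊢
    split_ifs at this <;> omega

theorem hammingDist_eq_one_iff_eq_update {x y : ∀ i, β i} {i : ι} (h : x i ≠ y i) :
    hammingDist x y = 1 ↔ y = update x i (y i) := by
  have := hammingDist_update_right_add x y i (x i)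
  simp only [h, ne_eq, not_true, not_false_eq_true, if_true, if_false, add_zero] at this
  rw [← this, add_eq_right, hammingDist_eq_zero, eq_update_iff, eq_update_iff]
  simp [eq_comm]

end Hamming

section DaisyCube

variable {n : ℕ} {V : Finset (Vtx n)}

theorem hammingDist_le_walk_length {a b : {u : Vtx n // u ∈ V}} (p : (cubeGraph V).Walk a b) :
    hammingDist a.1 b.1 ≤ p.length := by
  induction p with
  | nil => simp
  | @cons x y z hxy p ih =>
    have hxy : hammingDist x.1 y.1 = 1 := hxy
    have := hammingDist_triangle x.1 y.1 z.1
    rw [SimpleGraph.Walk.length_cons]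
    omega

theorem mk_mem_dirEdges {i : Fin n} {a b : {u : Vtx n // u ∈ V}} :
    s(a, b) ∈ dirEdges V i ↔ (cubeGraph V).Adj a b ∧ a.1 i ≠ b.1 i := by
  simp [dirEdges]

theorem mk_mem_dirEdges_iff_eq_update {i : Fin n} {a b : {u : Vtx n // u ∈ V}} :
    s(a, b) ∈ dirEdges V i ↔ a.1 i ≠ b.1 i ∧ b.1 = update a.1 i (b.1 i) := by
  rw [mk_mem_dirEdges, and_comm]
  exact and_congr_right hammingDist_eq_one_iff_eq_update

theorem biUnion_dirEdges : univ.biUnion (dirEdges V) = (cubeGraph V).edgeFinset := by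
  ext e
  simp only [mem_biUnion, mem_univ, true_and]
  refine ⟨fun ⟨i, hi⟩ => filter_subset _ _ hi, fun he => ?_⟩
  induction e using Sym2.ind with | _ a b => ?_
  have hab : (cubeGraph V).Adj a b := SimpleGraph.mem_edgeFinset.1 he
  obtain ⟨i, hi⟩ := Function.ne_iff.1 (Subtype.coe_ne_coe.2 hab.ne)
  exact ⟨i, mk_mem_dirEdges.2 ⟨hab, hi⟩⟩

theorem pairwiseDisjoint_dirEdges :
    ((univ : Finset (Fin n)) : Set (Fin n)).PairwiseDisjoint (dirEdges V) := by
  intro i _ j _ hij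
  refine disjoint_left.2 fun e hei hej => ?_
  induction e using Sym2.ind with | _ a b => ?_
  obtain ⟨-, hb⟩ := mk_mem_dirEdges_iff_eq_update.1 hei
  obtain ⟨hj, -⟩ := mk_mem_dirEdges_iff_eq_update.1 hej
  exact hj (by rw [congrFun hb j, update_of_ne hij.symm])

theorem sum_edgeFinset_eq_sum_dirEdges {M : Type*} [AddCommMonoid M]
    (f : Sym2 {u : Vtx n // u ∈ V} → M) :
    ∑ e ∈ (cubeGraph V).edgeFinset, f e = ∑ i, ∑ e ∈ dirEdges V i, f e := by
  rw [← biUnion_dirEdges, sum_biUnion pairwiseDisjoint_dirEdges]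

theorem card_edgeFinset_eq_sum_card_dirEdges :
    #(cubeGraph V).edgeFinset = ∑ i, #(dirEdges V i) := by
  rw [← biUnion_dirEdges, card_biUnion pairwiseDisjoint_dirEdges]

namespace DownClosed

variable (hdc : DownClosed V)
include hdc

theorem update_false_mem {w : Vtx n} (hw : w ∈ V) (i : Fin n) : update w i false ∈ V :=
  hdc _ w (update_le_iff.2 ⟨Bool.false_le _, fun _ _ => le_rfl⟩) hw

theorem exists_update_mem {u v : Vtx n} (hu : u ∈ V) (hv : v ∈ V) (huv : u ≠ v) :
    ∃ i, u i ≠ v i ∧ update u i (v i) ∈ V := by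
  by_cases h : ∃ i, u i = true ∧ v i = false
  · obtain ⟨i, hui, hvi⟩ := h
    refine ⟨i, by simp [hui, hvi], ?_⟩
    rw [hvi]
    exact hdc.update_false_mem hu i
  · simp only [not_exists, not_and] at h
    obtain ⟨i, hi⟩ := Function.ne_iff.1 huv
    refine ⟨i, hi, hdc _ v (update_le_iff.2 ⟨le_rfl, fun j _ => Bool.le_iff_imp.2 fun hj => ?_⟩) hv⟩
    simpa using h j hj

theorem exists_walk_length_eq_hammingDist {u v : Vtx n} (hu : u ∈ V) (hv : v ∈ V) :
    ∃ p : (cubeGraph V).Walk ⟨u, hu⟩ ⟨v, hv⟩, p.length = hammingDist u v := by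
  obtain ⟨k, hk⟩ : ∃ k, hammingDist u v = k := ⟨_, rfl⟩
  induction k generalizing u with
  | zero =>
    obtain rfl := hammingDist_eq_zero.1 hk
    exact ⟨.nil, hk.symm⟩
  | succ k ih =>
    obtain ⟨i, hi, hmem⟩ := hdc.exists_update_mem hu hv (hammingDist_ne_zero.1 (by omega))
    have hstep := hammingDist_update_left_add_one hi
    obtain ⟨p, hp⟩ := ih hmem (by omega)
    have hadj : (cubeGraph V).Adj ⟨u, hu⟩ ⟨_, hmem⟩ := hammingDist_update_self_right hi
    exact ⟨.cons hadj p, by rw [SimpleGraph.Walk.length_cons, hp]; omega⟩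

theorem dist_cubeGraph (a b : {u : Vtx n // u ∈ V}) :
    (cubeGraph V).dist a b = hammingDist a.1 b.1 := by
  obtain ⟨p, hp⟩ := hdc.exists_walk_length_eq_hammingDist a.2 b.2
  obtain ⟨q, hq⟩ := p.reachable.exists_walk_length_eq_dist
  exact le_antisymm (hp ▸ SimpleGraph.dist_le p) (hq ▸ hammingDist_le_walk_length q)

theorem closerCount_cubeGraph {i : Fin n} {a b : {u : Vtx n // u ∈ V}}
    (hab : s(a, b) ∈ dirEdges V i) :
    closerCount (cubeGraph V) a b = #(V.filter (· i = a.1 i)) := by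
  obtain ⟨hi, hb⟩ := mk_mem_dirEdges_iff_eq_update.1 hab
  have hcloser (w : {u : Vtx n // u ∈ V}) :
      (cubeGraph V).dist w a < (cubeGraph V).dist w b ↔ w.1 i = a.1 i := by
    rw [hdc.dist_cubeGraph, hdc.dist_cubeGraph, hb]
    exact hammingDist_lt_hammingDist_update_iff hi
  rw [closerCount, Nat.card_congr ((Equiv.subtypeEquivRight hcloser).trans
    (Equiv.subtypeSubtypeEquivSubtypeInter (· ∈ V) (· i = a.1 i))), ← Nat.card_eq_finsetCard]
  exact Nat.card_congr (Equiv.subtypeEquivRight fun _ => by simp)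

theorem card_filter_true_le_card_filter_false (i : Fin n) :
    #(V.filter (· i = true)) ≤ #(V.filter (· i = false)) := by
  refine card_le_card_of_injOn (update · i false) (fun w hw => ?_) fun w₁ hw₁ w₂ hw₂ h => ?_
  · simp only [coe_filter, Set.mem_ofPred_eq] at hw ⊢
    exact ⟨hdc.update_false_mem hw.1 i, update_self ..⟩
  · simp only [coe_filter, Set.mem_ofPred_eq] at hw₁ hw₂
    funext j
    by_cases hj : j = i
    · rw [hj, hw₁.2, hw₂.2]
    · simpa [update_of_ne hj] using congrFun h j

theorem card_dirEdges (i : Fin n) : #(dirEdges V i) = #(V.filter (· i = true)) := by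
  let lower (w : Vtx n) (hw : w ∈ V.filter (· i = true)) : Sym2 {u : Vtx n // u ∈ V} :=
    s(⟨w, (mem_filter.1 hw).1⟩, ⟨update w i false, hdc.update_false_mem (mem_filter.1 hw).1 i⟩)
  have lower_mem (w hw) : lower w hw ∈ dirEdges V i :=
    mk_mem_dirEdges_iff_eq_update.2 (by simp [(mem_filter.1 hw).2])
  have eq_lower {a b : {u : Vtx n // u ∈ V}} (hab : s(a, b) ∈ dirEdges V i) (ha : a.1 i = true) :
      ∃ w hw, lower w hw = s(a, b) := by
    obtain ⟨hi, hb⟩ := mk_mem_dirEdges_iff_eq_update.1 hab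
    refine ⟨a.1, mem_filter.2 ⟨a.2, ha⟩, congrArg (s(a, ·)) (Subtype.ext ?_)⟩
    have hbi : b.1 i = false := by rw [ha] at hi; simpa using hi.symm
    rw [hb, hbi]
  refine (card_bij lower lower_mem (fun w₁ hw₁ w₂ hw₂ h => ?_) fun e he => ?_).symm
  · rcases Sym2.eq_iff.1 h with ⟨h, -⟩ | ⟨h, -⟩
    · exact congrArg Subtype.val h
    · simpa [(mem_filter.1 hw₁).2] using congrArg (·.1 i) h
  · induction e using Sym2.ind with | _ a b => ?_
    cases ha : a.1 i
    · rw [Sym2.eq_swap] at he ⊢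
      exact eq_lower he (by simpa [ha] using (mk_mem_dirEdges.1 he).2)
    · exact eq_lower he ha

theorem natAbs_closerCount_sub {i : Fin n} {a b : {u : Vtx n // u ∈ V}}
    (hab : s(a, b) ∈ dirEdges V i) :
    (((closerCount (cubeGraph V) a b : ℤ) - closerCount (cubeGraph V) b a).natAbs : ℤ) =
      #V - 2 * #(dirEdges V i) := by
  have hba : s(b, a) ∈ dirEdges V i := Sym2.eq_swap ▸ hab
  have hsplit := card_filter_add_card_filter_not (s := V) (p := (· i = true))
  simp only [Bool.not_eq_true] at hsplit
  have hle := hdc.card_filter_true_le_card_filter_false i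
  rw [hdc.closerCount_cubeGraph hab, hdc.closerCount_cubeGraph hba, hdc.card_dirEdges]
  have hi := (mk_mem_dirEdges.1 hab).2
  cases ha : a.1 i <;> cases hb : b.1 i <;> simp only [ha, hb, ne_eq, not_true] at hi <;> omega

end DownClosed

end DaisyCube

theorem daisy_mostar_formula_general {n : ℕ} (V : Finset (Vtx n))
    (hdc : DownClosed V) :
    (mostar (cubeGraph V) : ℤ) =
      (V.card : ℤ) * ((cubeGraph V).edgeFinset.card : ℤ) -
        2 * ∑ i : Fin n, ((dirEdges V i).card : ℤ) ^ 2 := by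
  calc (mostar (cubeGraph V) : ℤ)
      = ∑ i, ∑ _e ∈ dirEdges V i, ((#V : ℤ) - 2 * #(dirEdges V i)) := by
        rw [mostar, Nat.cast_sum, sum_edgeFinset_eq_sum_dirEdges]
        refine sum_congr rfl fun i _ => sum_congr rfl fun e he => ?_
        induction e using Sym2.ind with | _ a b => exact hdc.natAbs_closerCount_sub he
    _ = _ := by
        rw [card_edgeFinset_eq_sum_card_dirEdges, Nat.cast_sum, mul_sum, mul_sum,
          ← sum_sub_distrib]
        exact sum_congr rfl fun i _ => by rw [sum_const, nsmul_eq_mul]; ring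

/-- For a daisy cube `G`, with `|E_i|` the number of edges using
direction `i`: `Mo(G) = |V(G)|·|E(G)| - 2·∑_{i=1}^n |E_i|²`. -/
theorem daisy_mostar_formula {n : ℕ} (V : Finset (Vtx n))
    (hne : V.Nonempty) (hdc : DownClosed V) :
    (mostar (cubeGraph V) : ℤ) =
      (V.card : ℤ) * ((cubeGraph V).edgeFinset.card : ℤ) -
        2 * ∑ i : Fin n, ((dirEdges V i).card : ℤ) ^ 2 :=
  daisy_mostar_formula_general V hdc
end

section
/- Let G be a daisy cube of dimension n, i.e., the subgraph of the hypercube Q_n induced by a nonempty downward-closed vertex set V ⊆ {0,1}^n, and let uv be an edge of G using direction i with u_i = 0 (so v_i = 1). Then n_{u,v} = |W_{(i,0)}(G)| and n_{v,u} = |W_{(i,1)}(G)|; in particular n_{u,v} ≥ n_{v,u}, so the contribution |n_{u,v} − n_{v,u}| of the edge uv to the Mostar index equals |W_{(i,0)}(G)| − |W_{(i,1)}(G)|. -/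
/-!
Because `V` is downward closed, any two of its vertices are joined inside `V` by a walk whose
length is their Hamming distance (always flip down a coordinate that is `1` in one endpoint and
`0` in the other), so graph distance in a daisy cube is Hamming distance. For an edge `uv` in
direction `i`, every vertex `w` is then one step closer to whichever of `u`, `v` agrees with it in
coordinate `i`, so `n_{u,v}` counts the semicube `W_{(i, u_i)}`. Finally, clearing coordinate `i`
injects `W_{(i,1)}` into `W_{(i,0)}`.
-/

section Hamming

variable {ι β : Type*} [Fintype ι] [DecidableEq ι] [DecidableEq β]

theorem hammingDist_update_of_eq {a x : ι → β} {i : ι} {c : β} (ha : a i = x i)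
    (hc : c ≠ x i) : hammingDist a (Function.update x i c) = hammingDist a x + 1 := by
  have hdiff : (Finset.univ.filter fun j => a j ≠ Function.update x i c j) =
      insert i (Finset.univ.filter fun j => a j ≠ x j) := by
    ext j
    by_cases hj : j = i
    · subst hj
      simp [ha, hc.symm]
    · simp [hj]
  have hi : i ∉ Finset.univ.filter fun j => a j ≠ x j := by simp [ha]
  exact (congrArg Finset.card hdiff).trans (Finset.card_insert_of_notMem hi)

theorem hammingDist_update_self {x : ι → β} {i : ι} {c : β} (hc : c ≠ x i) :
    hammingDist x (Function.update x i c) = 1 := by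
  simpa using hammingDist_update_of_eq rfl hc

theorem eq_update_of_hammingDist_eq_one {x y : ι → β} {i : ι} (h : hammingDist x y = 1)
    (hi : x i ≠ y i) : y = Function.update x i (y i) := by
  funext j
  by_cases hj : j = i
  · subst hj
    simp
  · rw [Function.update_of_ne hj]
    by_contra hxy
    exact hj (Finset.card_le_one.mp h.le j (by simpa [eq_comm] using hxy) i (by simpa using hi))

end Hamming

section DaisyCube

variable {n : ℕ} {V : Finset (Vtx n)}

theorem DownClosed.update_mem (hdc : DownClosed V) {w : Vtx n} (hw : w ∈ V) {i : Fin n}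
    {c : Bool} (hc : c ≤ w i) : Function.update w i c ∈ V := by
  refine hdc _ w (fun k => ?_) hw
  by_cases hk : k = i
  · subst hk
    simpa using hc
  · simp [hk]

theorem hammingDist_le_length {a b : {x : Vtx n // x ∈ V}} (p : (cubeGraph V).Walk a b) :
    hammingDist a.1 b.1 ≤ p.length := by
  induction p with
  | nil => simp
  | @cons a c b hac p ih =>
    have hac : hammingDist a.1 c.1 = 1 := hac
    have := hammingDist_triangle a.1 c.1 b.1
    simp only [SimpleGraph.Walk.length_cons]
    omega

theorem DownClosed.exists_walk_length_eq_hammingDist_s10 (hdc : DownClosed V)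
    (w u : {x : Vtx n // x ∈ V}) :
    ∃ p : (cubeGraph V).Walk w u, p.length = hammingDist w.1 u.1 := by
  induction hk : hammingDist w.1 u.1 generalizing w u with
  | zero =>
    obtain rfl : w = u := Subtype.ext (hammingDist_eq_zero.mp hk)
    exact ⟨.nil, rfl⟩
  | succ k ih =>
    obtain ⟨j, hj⟩ : ∃ j, w.1 j ≠ u.1 j := Function.ne_iff.mp (hammingDist_pos.mp (by omega))
    wlog hwj : w.1 j = true generalizing w u
    · obtain ⟨p, hp⟩ := this u w (by rw [hammingDist_comm, hk]) (Ne.symm hj)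
        (by simpa [hwj] using hj.symm)
      exact ⟨p.reverse, by rw [SimpleGraph.Walk.length_reverse, hp]⟩
    set w' := Function.update w.1 j (u.1 j)
    have hw' : w' ∈ V := hdc.update_mem w.2 (hwj ▸ Bool.le_true _)
    have hstep : hammingDist u.1 w.1 = hammingDist u.1 w' + 1 := by
      simpa [w'] using hammingDist_update_of_eq (a := u.1) (x := w') (i := j) (c := w.1 j)
        (by simp [w']) (by simpa [w'] using hj)
    obtain ⟨p, hp⟩ := ih ⟨w', hw'⟩ u
      (show hammingDist w' u.1 = k by rw [hammingDist_comm w.1] at hk; rw [hammingDist_comm]; omega)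
    have hadj : (cubeGraph V).Adj w ⟨w', hw'⟩ := hammingDist_update_self (Ne.symm hj)
    exact ⟨.cons hadj p, by simp [hp]⟩

theorem DownClosed.dist_eq_hammingDist (hdc : DownClosed V) (w u : {x : Vtx n // x ∈ V}) :
    (cubeGraph V).dist w u = hammingDist w.1 u.1 := by
  obtain ⟨p, hp⟩ := hdc.exists_walk_length_eq_hammingDist_s10 w u
  obtain ⟨q, hq⟩ := SimpleGraph.Reachable.exists_walk_length_eq_dist ⟨p⟩
  exact le_antisymm (hp ▸ SimpleGraph.dist_le p) (hq ▸ hammingDist_le_length q)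

theorem natCard_subtype_eq_card_semicube (i : Fin n) (χ : Bool) :
    Nat.card {w : {x : Vtx n // x ∈ V} // w.1 i = χ} = (semicube V i χ).card := by
  rw [Nat.card_congr ((Equiv.subtypeSubtypeEquivSubtypeInter (· ∈ V) (· i = χ)).trans
      (Equiv.subtypeEquivRight (q := (· ∈ semicube V i χ)) fun x => by simp [semicube])),
    Nat.card_eq_fintype_card, Fintype.card_coe]

theorem DownClosed.closerCount_eq_card_semicube (hdc : DownClosed V) {i : Fin n}
    {u v : {x : Vtx n // x ∈ V}} (hadj : (cubeGraph V).Adj u v) (hdir : u.1 i ≠ v.1 i) :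
    closerCount (cubeGraph V) u v = (semicube V i (u.1 i)).card := by
  have hv : v.1 = Function.update u.1 i (v.1 i) := eq_update_of_hammingDist_eq_one hadj hdir
  have hu : u.1 = Function.update v.1 i (u.1 i) :=
    eq_update_of_hammingDist_eq_one ((hammingDist_comm _ _).trans hadj) hdir.symm
  have hcloser : ∀ w : {x : Vtx n // x ∈ V},
      (cubeGraph V).dist w u < (cubeGraph V).dist w v ↔ w.1 i = u.1 i := by
    intro w
    rw [hdc.dist_eq_hammingDist, hdc.dist_eq_hammingDist]
    by_cases hwu : w.1 i = u.1 i
    · have := hammingDist_update_of_eq (a := w.1) hwu hdir.symm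
      rw [← hv] at this
      simp [hwu, this]
    · have hwv : w.1 i = v.1 i := by
        revert hwu hdir; cases w.1 i <;> cases u.1 i <;> cases v.1 i <;> simp
      have := hammingDist_update_of_eq (a := w.1) hwv hdir
      rw [← hu] at this
      simp [hwu, this]
  rw [closerCount, Nat.card_congr (Equiv.subtypeEquivRight hcloser),
    natCard_subtype_eq_card_semicube]

theorem DownClosed.card_semicube_true_le_false (hdc : DownClosed V) (i : Fin n) :
    (semicube V i true).card ≤ (semicube V i false).card := by
  refine Finset.card_le_card_of_injOn (Function.update · i false) (fun w hw => ?_) ?_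
  · exact Finset.mem_filter.mpr
      ⟨hdc.update_mem (Finset.mem_filter.mp hw).1 (Bool.false_le _), Function.update_self ..⟩
  · intro w hw w' hw' heq
    rw [← Function.update_eq_self i w, ← Function.update_eq_self i w',
      (Finset.mem_filter.mp hw).2, (Finset.mem_filter.mp hw').2]
    simpa using congrArg (Function.update · i true) heq

end DaisyCube

theorem daisy_edge_mostar_contribution_general {n : ℕ} (V : Finset (Vtx n))
    (hdc : DownClosed V) (i : Fin n)
    (u v : {x : Vtx n // x ∈ V}) (hadj : (cubeGraph V).Adj u v)
    (hdir : u.1 i ≠ v.1 i) (hui : u.1 i = false) :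
    closerCount (cubeGraph V) u v = (semicube V i false).card ∧
      closerCount (cubeGraph V) v u = (semicube V i true).card ∧
      closerCount (cubeGraph V) v u ≤ closerCount (cubeGraph V) u v ∧
      (((closerCount (cubeGraph V) u v : ℤ) - (closerCount (cubeGraph V) v u : ℤ)).natAbs : ℤ) =
        ((semicube V i false).card : ℤ) - ((semicube V i true).card : ℤ) := by
  have hvi : v.1 i = true := by simpa [hui] using hdir.symm
  have huv := hdc.closerCount_eq_card_semicube hadj hdir
  have hvu := hdc.closerCount_eq_card_semicube hadj.symm hdir.symm
  rw [hui] at huv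
  rw [hvi] at hvu
  have hle := hdc.card_semicube_true_le_false i
  refine ⟨huv, hvu, huv ▸ hvu ▸ hle, ?_⟩
  rw [huv, hvu]
  omega

/-- In a daisy cube, for an edge `uv` using direction `i` with
`u_i = 0` (so `v_i = 1`): `n_{u,v} = |W_{(i,0)}(G)|`, `n_{v,u} = |W_{(i,1)}(G)|`,
in particular `n_{u,v} ≥ n_{v,u}`, and the contribution `|n_{u,v} - n_{v,u}|` of the
edge `uv` to the Mostar index equals `|W_{(i,0)}(G)| - |W_{(i,1)}(G)|`. -/
theorem daisy_edge_mostar_contribution {n : ℕ} (V : Finset (Vtx n))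
    (hne : V.Nonempty) (hdc : DownClosed V) (i : Fin n)
    (u v : {x : Vtx n // x ∈ V}) (hadj : (cubeGraph V).Adj u v)
    (hdir : u.1 i ≠ v.1 i) (hui : u.1 i = false) :
    closerCount (cubeGraph V) u v = (semicube V i false).card ∧
      closerCount (cubeGraph V) v u = (semicube V i true).card ∧
      closerCount (cubeGraph V) v u ≤ closerCount (cubeGraph V) u v ∧
      (((closerCount (cubeGraph V) u v : ℤ) - (closerCount (cubeGraph V) v u : ℤ)).natAbs : ℤ) =
        ((semicube V i false).card : ℤ) - ((semicube V i true).card : ℤ) :=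
  daisy_edge_mostar_contribution_general V hdc i u v hadj hdir hui
end
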